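/- arXiv:2210.11120 — 4 statements merged into one kernel-verified Lean document; each statement's English description precedes it below -/
import Mathlib

section
/- Let G be a connected finite simple graph that is not isomorphic to the complete graph K_2, and let e = uv be an edge of G. Then γst(G) − 1 ≤ γst(G − e) ≤ γst(G) + deg(u) + deg(v) − 2, where G − e denotes the graph obtained from G by deleting the edge e. -/
open SimpleGraph

/-- The degree of a vertex, as the cardinality of its neighbor set. -/
noncomputable def sdeg {V : Type*} (G : SimpleGraph V) (v : V) : ℕ :=
  (G.neighborSet v).ncard

/-- `D` is a strong dominating set of `G` if every vertex outside `D` has a neighbor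
in `D` of at least the same degree. -/
def IsStrongDominatingSet {V : Type*} (G : SimpleGraph V) (D : Set V) : Prop :=
  ∀ x ∉ D, ∃ y ∈ D, G.Adj x y ∧ sdeg G x ≤ sdeg G y

/-- The strong domination number: minimum cardinality of a strong dominating set. -/
noncomputable def strongDominationNumber {V : Type*} (G : SimpleGraph V) : ℕ :=
  sInf {n | ∃ D : Set V, IsStrongDominatingSet G D ∧ D.ncard = n}

/-- Subdivision of the edge `uv` of `G`: delete `uv`, add a new vertex `none`
adjacent to `u` and `v`. -/
def subdivide {V : Type*} (G : SimpleGraph V) (u v : V) : SimpleGraph (Option V) :=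
  SimpleGraph.fromRel (fun a b =>
    match a, b with
    | some x, some y => G.Adj x y ∧ ¬(s(x, y) = s(u, v))
    | some x, none => x = u ∨ x = v
    | none, some _ => False
    | none, none => False)

/-- Contraction of the edge `uv` of `G`: the vertex `u` plays the role of the merged
vertex, and `v` is removed. -/
def contractEdge {V : Type*} (G : SimpleGraph V) (u v : V) :
    SimpleGraph {x : V // x ≠ v} :=
  SimpleGraph.fromRel (fun a b =>
    G.Adj a.1 b.1 ∨ (a.1 = u ∧ G.Adj v b.1) ∨ (b.1 = u ∧ G.Adj a.1 v))

/-- The corona product `G1 ∘ G2`: one copy of `G1` together with one copy of `G2`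
for each vertex `i` of `G1`, where `i` is joined to all vertices of its copy. -/
def corona {V1 V2 : Type*} (G1 : SimpleGraph V1) (G2 : SimpleGraph V2) :
    SimpleGraph (V1 ⊕ V1 × V2) :=
  SimpleGraph.fromRel (fun a b =>
    match a, b with
    | .inl a, .inl b => G1.Adj a b
    | .inl a, .inr (i, _) => a = i
    | .inr _, .inl _ => False
    | .inr (i, x), .inr (j, y) => i = j ∧ G2.Adj x y)

/-- The `k`-subdivision `G^{1/k}` of `G`: every edge is replaced by a path of length
`k`, the internal vertices of the path replacing `e` being indexed by `e` and a
position in `Fin (k-1)` (an orientation of `e` is chosen via `Quot.out`). -/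
noncomputable def kSubdivision {V : Type*} (G : SimpleGraph V) (k : ℕ) :
    SimpleGraph (V ⊕ G.edgeSet × Fin (k - 1)) :=
  SimpleGraph.fromRel (fun a b =>
    match a, b with
    | .inl x, .inl y => k ≤ 1 ∧ G.Adj x y
    | .inl x, .inr (e, i) =>
        (x = (Quot.out (e : Sym2 V)).1 ∧ (i : ℕ) = 0) ∨
        (x = (Quot.out (e : Sym2 V)).2 ∧ (i : ℕ) = k - 2)
    | .inr _, .inl _ => False
    | .inr (e, i), .inr (f, j) => e = f ∧ (j : ℕ) = (i : ℕ) + 1)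

/-! Deleting `uv` lowers the degrees of `u` and `v` by one and leaves all other adjacencies and
degrees unchanged, so strong domination can only break at `u`, `v` and their neighbours.

For the lower bound, a strong dominating set of `G - uv` together with the endpoint of larger
degree strongly dominates `G`. For the upper bound, take a minimum strong dominating set `D` of
`G`. If `u, v ∈ D`, add their other neighbours. If `u, v ∉ D`, add `u` and `v`; both have degree
at least two, being dominated by vertices of `D`. If `u ∉ D ∋ v`, add `u` and the other
neighbours of `v`; this is one vertex too many only when `deg u = 1`, and then `deg v ≥ 2`
(otherwise `G = K₂`), so either some other neighbour `z` of `v` has smaller degree than `v` and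
stays dominated by `v`, or `v` itself is dominated by any other neighbour. -/

open Set

section

variable {V : Type*} {G : SimpleGraph V} {u v x : V} {D : Set V}

theorem strongDominationNumber_le_ncard (hD : IsStrongDominatingSet G D) :
    strongDominationNumber G ≤ D.ncard :=
  Nat.sInf_le ⟨D, hD, rfl⟩

theorem exists_isStrongDominatingSet_ncard_eq (G : SimpleGraph V) :
    ∃ D : Set V, IsStrongDominatingSet G D ∧ D.ncard = strongDominationNumber G :=
  Nat.sInf_mem (s := {n | ∃ D : Set V, IsStrongDominatingSet G D ∧ D.ncard = n})
    ⟨_, univ, fun x hx => absurd (mem_univ x) hx, rfl⟩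

theorem neighborSet_deleteEdges_of_ne (hxu : x ≠ u) (hxv : x ≠ v) :
    (G.deleteEdges {s(u, v)}).neighborSet x = G.neighborSet x := by
  ext y
  simp [hxu, hxv]

theorem neighborSet_deleteEdges_right :
    (G.deleteEdges {s(u, v)}).neighborSet v = G.neighborSet v \ {u} := by
  ext y
  simp only [mem_neighborSet, deleteEdges_adj, mem_singleton_iff, Sym2.eq_iff, mem_sdiff]
  grind

theorem sdeg_deleteEdges_of_ne (hxu : x ≠ u) (hxv : x ≠ v) :
    sdeg (G.deleteEdges {s(u, v)}) x = sdeg G x :=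
  congrArg ncard (neighborSet_deleteEdges_of_ne hxu hxv)

theorem neighborSet_eq_singleton_of_sdeg_eq_one (huv : G.Adj u v) (hu : sdeg G u = 1) :
    G.neighborSet u = {v} := by
  obtain ⟨w, hw⟩ := ncard_eq_one.mp hu
  have hv : v ∈ G.neighborSet u := huv
  rw [hw, mem_singleton_iff] at hv
  rw [hw, hv]

theorem deleteEdges_adj_of_ne {y : V} (hxy : G.Adj x y) (hxu : x ≠ u) (hxv : x ≠ v) :
    (G.deleteEdges {s(u, v)}).Adj x y := by
  rw [deleteEdges_adj, mem_singleton_iff, Sym2.eq_iff]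
  tauto

theorem IsStrongDominatingSet.exists_deleteEdges_dominator (hD : IsStrongDominatingSet G D)
    (hxD : x ∉ D) (hxu : x ≠ u) (hxv : x ≠ v) (hu : u ∈ D → ¬G.Adj x u)
    (hv : v ∈ D → ¬G.Adj x v) :
    ∃ y ∈ D, y ≠ u ∧ y ≠ v ∧ (G.deleteEdges {s(u, v)}).Adj x y ∧
      sdeg (G.deleteEdges {s(u, v)}) x ≤ sdeg (G.deleteEdges {s(u, v)}) y := by
  obtain ⟨y, hyD, hxy, hdeg⟩ := hD x hxD
  have hyu : y ≠ u := by rintro rfl; exact hu hyD hxy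
  have hyv : y ≠ v := by rintro rfl; exact hv hyD hxy
  refine ⟨y, hyD, hyu, hyv, deleteEdges_adj_of_ne hxy hxu hxv, ?_⟩
  rwa [sdeg_deleteEdges_of_ne hxu hxv, sdeg_deleteEdges_of_ne hyu hyv]

theorem SimpleGraph.Connected.eq_or_eq_of_neighborSet_eq_singleton (hconn : G.Connected)
    (hu : G.neighborSet u = {v}) (hv : G.neighborSet v = {u}) (w : V) : w = u ∨ w = v := by
  by_contra hw
  obtain ⟨d, -, hd, hd'⟩ := ((hconn u w).some).exists_boundary_dart {u, v} (by simp) hw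
  have hadj : d.snd ∈ G.neighborSet d.fst := d.adj
  rcases hd with h | h <;> rw [h] at hadj
  · rw [hu] at hadj
    exact hd' (Or.inr hadj)
  · rw [hv] at hadj
    exact hd' (Or.inl hadj)

theorem nonempty_iso_top_fin_two_of_forall_eq_or_eq (huv : G.Adj u v)
    (hV : ∀ w, w = u ∨ w = v) : Nonempty (G ≃g (⊤ : SimpleGraph (Fin 2))) := by
  have hG : G = ⊤ := by
    ext a b
    rw [top_adj]
    refine ⟨Adj.ne, fun hab => ?_⟩
    rcases hV a with rfl | rfl <;> rcases hV b with rfl | rfl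
    exacts [absurd rfl hab, huv, huv.symm, absurd rfl hab]
  have hcard : Nat.card V = 2 :=
    Nat.card_eq_two_iff.mpr ⟨u, v, huv.ne, eq_univ_of_forall fun w => hV w⟩
  have : Finite V := Nat.finite_of_card_ne_zero (by omega)
  subst hG
  exact ⟨Iso.completeGraph (Finite.equivFinOfCardEq hcard)⟩

variable [Finite V]

theorem sdeg_mono {H : SimpleGraph V} (hGH : G ≤ H) (x : V) : sdeg G x ≤ sdeg H x :=
  ncard_le_ncard (neighborSet_mono hGH x)

theorem ncard_neighborSet_sdiff_singleton_add_one (huv : G.Adj u v) :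
    (G.neighborSet u \ {v}).ncard + 1 = sdeg G u :=
  ncard_sdiff_singleton_add_one huv

theorem sdeg_deleteEdges_right_add_one (huv : G.Adj u v) :
    sdeg (G.deleteEdges {s(u, v)}) v + 1 = sdeg G v := by
  rw [sdeg, neighborSet_deleteEdges_right]
  exact ncard_neighborSet_sdiff_singleton_add_one huv.symm

theorem IsStrongDominatingSet.insert_of_deleteEdges (huv : G.Adj u v)
    (hvu : sdeg G v ≤ sdeg G u) (hD : IsStrongDominatingSet (G.deleteEdges {s(u, v)}) D) :
    IsStrongDominatingSet G (insert u D) := by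
  intro x hx
  rw [mem_insert_iff, not_or] at hx
  obtain ⟨hxu, hxD⟩ := hx
  by_cases hxv : x = v
  · subst hxv
    exact ⟨u, mem_insert u D, huv.symm, hvu⟩
  obtain ⟨y, hyD, hxy, hdeg⟩ := hD x hxD
  refine ⟨y, mem_insert_of_mem u hyD, deleteEdges_le _ hxy, ?_⟩
  calc sdeg G x = sdeg (G.deleteEdges {s(u, v)}) x := (sdeg_deleteEdges_of_ne hxu hxv).symm
    _ ≤ sdeg (G.deleteEdges {s(u, v)}) y := hdeg
    _ ≤ sdeg G y := sdeg_mono (deleteEdges_le _) y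

theorem strongDominationNumber_le_deleteEdges_add_one (huv : G.Adj u v) :
    strongDominationNumber G ≤ strongDominationNumber (G.deleteEdges {s(u, v)}) + 1 := by
  obtain ⟨D, hD, hcard⟩ := exists_isStrongDominatingSet_ncard_eq (G.deleteEdges {s(u, v)})
  obtain ⟨w, hw⟩ : ∃ w, IsStrongDominatingSet G (insert w D) := by
    rcases le_total (sdeg G v) (sdeg G u) with hvu | huv_deg
    · exact ⟨u, hD.insert_of_deleteEdges huv hvu⟩
    · rw [Sym2.eq_swap] at hD
      exact ⟨v, hD.insert_of_deleteEdges huv.symm huv_deg⟩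
  calc strongDominationNumber G ≤ (insert w D).ncard := strongDominationNumber_le_ncard hw
    _ ≤ D.ncard + 1 := ncard_insert_le w D
    _ = _ := by rw [hcard]

theorem one_lt_sdeg_of_adj_of_adj {y z : V} (hy : G.Adj x y) (hz : G.Adj x z) (hyz : y ≠ z) :
    1 < sdeg G x :=
  (one_lt_ncard_iff).mpr ⟨y, z, hy, hz, hyz⟩

theorem one_le_sdeg_of_adj (huv : G.Adj u v) : 1 ≤ sdeg G u :=
  (ncard_pos).mpr ⟨v, huv⟩

namespace IsStrongDominatingSet

theorem strongDominationNumber_deleteEdges_add_two_le_of_mem_of_mem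
    (hD : IsStrongDominatingSet G D) (huv : G.Adj u v) (hu : u ∈ D) (hv : v ∈ D) :
    strongDominationNumber (G.deleteEdges {s(u, v)}) + 2 ≤ D.ncard + sdeg G u + sdeg G v := by
  have hD' : IsStrongDominatingSet (G.deleteEdges {s(u, v)})
      (D ∪ (G.neighborSet u \ {v}) ∪ (G.neighborSet v \ {u})) := by
    intro x hx
    simp only [mem_union, mem_sdiff, mem_neighborSet, mem_singleton_iff, not_or, not_and,
      not_not] at hx
    obtain ⟨⟨hxD, hxNu⟩, hxNv⟩ := hx
    have hxu : x ≠ u := by rintro rfl; exact hxD hu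
    have hxv : x ≠ v := by rintro rfl; exact hxD hv
    obtain ⟨y, hyD, -, -, hxy, hdeg⟩ := hD.exists_deleteEdges_dominator hxD hxu hxv
      (fun _ h => hxv (hxNu h.symm)) (fun _ h => hxu (hxNv h.symm))
    exact ⟨y, Or.inl (Or.inl hyD), hxy, hdeg⟩
  have := strongDominationNumber_le_ncard hD'
  have := ncard_union_le (D ∪ (G.neighborSet u \ {v})) (G.neighborSet v \ {u})
  have := ncard_union_le D (G.neighborSet u \ {v})
  have := ncard_neighborSet_sdiff_singleton_add_one huv
  have := ncard_neighborSet_sdiff_singleton_add_one huv.symm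
  omega

theorem strongDominationNumber_deleteEdges_add_two_le_of_notMem_of_notMem
    (hD : IsStrongDominatingSet G D) (huv : G.Adj u v) (hu : u ∉ D) (hv : v ∉ D) :
    strongDominationNumber (G.deleteEdges {s(u, v)}) + 2 ≤ D.ncard + sdeg G u + sdeg G v := by
  have hD' : IsStrongDominatingSet (G.deleteEdges {s(u, v)}) (insert u (insert v D)) := by
    intro x hx
    simp only [mem_insert_iff, not_or] at hx
    obtain ⟨hxu, hxv, hxD⟩ := hx
    obtain ⟨y, hyD, -, -, hxy, hdeg⟩ := hD.exists_deleteEdges_dominator hxD hxu hxv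
      (absurd · hu) (absurd · hv)
    exact ⟨y, Or.inr (Or.inr hyD), hxy, hdeg⟩
  obtain ⟨y, hyD, huy, -⟩ := hD u hu
  obtain ⟨z, hzD, hvz, -⟩ := hD v hv
  have := one_lt_sdeg_of_adj_of_adj huv huy (by rintro rfl; exact hv hyD)
  have := one_lt_sdeg_of_adj_of_adj huv.symm hvz (by rintro rfl; exact hu hzD)
  have := strongDominationNumber_le_ncard hD'
  have := ncard_insert_le u (insert v D)
  have := ncard_insert_le v D
  omega

theorem strongDominationNumber_deleteEdges_le_of_notMem_of_mem
    (hD : IsStrongDominatingSet G D) (huv : G.Adj u v) (hu : u ∉ D) (hv : v ∈ D) :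
    strongDominationNumber (G.deleteEdges {s(u, v)}) ≤ D.ncard + sdeg G v := by
  have hD' : IsStrongDominatingSet (G.deleteEdges {s(u, v)})
      (insert u (D ∪ (G.neighborSet v \ {u}))) := by
    intro x hx
    simp only [mem_insert_iff, mem_union, mem_sdiff, mem_neighborSet, mem_singleton_iff, not_or,
      not_and, not_not] at hx
    obtain ⟨hxu, hxD, hxNv⟩ := hx
    have hxv : x ≠ v := by rintro rfl; exact hxD hv
    obtain ⟨y, hyD, -, -, hxy, hdeg⟩ := hD.exists_deleteEdges_dominator hxD hxu hxv
      (absurd · hu) (fun _ h => hxu (hxNv h.symm))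
    exact ⟨y, Or.inr (Or.inl hyD), hxy, hdeg⟩
  have := strongDominationNumber_le_ncard hD'
  have := ncard_insert_le u (D ∪ (G.neighborSet v \ {u}))
  have := ncard_union_le D (G.neighborSet v \ {u})
  have := ncard_neighborSet_sdiff_singleton_add_one huv.symm
  omega

/-- `v` still dominates `z` in `G - uv`, so `z` need not be added. -/
theorem strongDominationNumber_deleteEdges_add_one_le_of_sdeg_lt {z : V}
    (hD : IsStrongDominatingSet G D) (huv : G.Adj u v) (hu : u ∉ D) (hv : v ∈ D)
    (hvz : G.Adj v z) (hzu : z ≠ u) (hlt : sdeg G z < sdeg G v) :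
    strongDominationNumber (G.deleteEdges {s(u, v)}) + 1 ≤ D.ncard + sdeg G v := by
  have hD' : IsStrongDominatingSet (G.deleteEdges {s(u, v)})
      (insert u (D ∪ (G.neighborSet v \ {u, z}))) := by
    intro x hx
    simp only [mem_insert_iff, mem_union, mem_sdiff, mem_neighborSet, mem_singleton_iff, not_or,
      not_and, not_not] at hx
    obtain ⟨hxu, hxD, hxNv⟩ := hx
    have hxv : x ≠ v := by rintro rfl; exact hxD hv
    by_cases hxz : x = z
    · subst hxz
      refine ⟨v, Or.inr (Or.inl hv), deleteEdges_adj_of_ne hvz.symm hxu hxv, ?_⟩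
      have := sdeg_deleteEdges_right_add_one huv
      rw [sdeg_deleteEdges_of_ne hxu hxv]
      omega
    obtain ⟨y, hyD, -, -, hxy, hdeg⟩ := hD.exists_deleteEdges_dominator hxD hxu hxv
      (absurd · hu) (fun _ h => hxz (hxNv h.symm hxu))
    exact ⟨y, Or.inr (Or.inl hyD), hxy, hdeg⟩
  have hpair : {u, z} ⊆ G.neighborSet v := insert_subset huv.symm (singleton_subset_iff.mpr hvz)
  have := strongDominationNumber_le_ncard hD'
  have := ncard_insert_le u (D ∪ (G.neighborSet v \ {u, z}))
  have := ncard_union_le D (G.neighborSet v \ {u, z})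
  have := ncard_sdiff_add_ncard_of_subset hpair
  have := ncard_pair hzu.symm
  have : sdeg G v = (G.neighborSet v).ncard := rfl
  omega

/-- `z` dominates `v` in `G - uv`, so `v` can be dropped. -/
theorem strongDominationNumber_deleteEdges_add_one_le_of_forall_sdeg_le {z : V}
    (hD : IsStrongDominatingSet G D) (huv : G.Adj u v) (hu : u ∉ D) (hv : v ∈ D)
    (hvz : G.Adj v z) (hzu : z ≠ u) (hle : ∀ w, G.Adj v w → w ≠ u → sdeg G v ≤ sdeg G w) :
    strongDominationNumber (G.deleteEdges {s(u, v)}) + 1 ≤ D.ncard + sdeg G v := by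
  have hD' : IsStrongDominatingSet (G.deleteEdges {s(u, v)})
      (insert u ((D \ {v}) ∪ (G.neighborSet v \ {u}))) := by
    intro x hx
    simp only [mem_insert_iff, mem_union, mem_sdiff, mem_neighborSet, mem_singleton_iff, not_or,
      not_and, not_not] at hx
    obtain ⟨hxu, hxD, hxNv⟩ := hx
    by_cases hxv : x = v
    · subst hxv
      have hzv : z ≠ x := hvz.ne.symm
      refine ⟨z, Or.inr (Or.inr ⟨hvz, hzu⟩), (deleteEdges_adj_of_ne hvz.symm hzu hzv).symm, ?_⟩
      rw [sdeg_deleteEdges_of_ne hzu hzv]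
      exact (sdeg_mono (deleteEdges_le _) x).trans (hle z hvz hzu)
    obtain ⟨y, hyD, -, hyv, hxy, hdeg⟩ := hD.exists_deleteEdges_dominator (fun h => hxv (hxD h)) hxu
      hxv (absurd · hu) (fun _ h => hxu (hxNv h.symm))
    exact ⟨y, Or.inr (Or.inl ⟨hyD, hyv⟩), hxy, hdeg⟩
  have := strongDominationNumber_le_ncard hD'
  have := ncard_insert_le u ((D \ {v}) ∪ (G.neighborSet v \ {u}))
  have := ncard_union_le (D \ {v}) (G.neighborSet v \ {u})
  have := ncard_sdiff_singleton_add_one hv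
  have := ncard_neighborSet_sdiff_singleton_add_one huv.symm
  omega

theorem strongDominationNumber_deleteEdges_add_two_le_of_notMem_of_mem
    (hD : IsStrongDominatingSet G D) (huv : G.Adj u v) (hu : u ∉ D) (hv : v ∈ D)
    (hdeg : ¬(sdeg G u = 1 ∧ sdeg G v = 1)) :
    strongDominationNumber (G.deleteEdges {s(u, v)}) + 2 ≤ D.ncard + sdeg G u + sdeg G v := by
  have := one_le_sdeg_of_adj huv
  have := one_le_sdeg_of_adj huv.symm
  by_cases hu2 : 2 ≤ sdeg G u
  · have := hD.strongDominationNumber_deleteEdges_le_of_notMem_of_mem huv hu hv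
    omega
  obtain ⟨z, hvz, hzu⟩ := exists_ne_of_one_lt_ncard (s := G.neighborSet v)
    (by change 1 < sdeg G v; omega) u
  suffices strongDominationNumber (G.deleteEdges {s(u, v)}) + 1 ≤ D.ncard + sdeg G v by omega
  by_cases hlt : ∃ w, G.Adj v w ∧ w ≠ u ∧ sdeg G w < sdeg G v
  · obtain ⟨w, hvw, hwu, hwv⟩ := hlt
    exact hD.strongDominationNumber_deleteEdges_add_one_le_of_sdeg_lt huv hu hv hvw hwu hwv
  · push Not at hlt
    exact hD.strongDominationNumber_deleteEdges_add_one_le_of_forall_sdeg_le huv hu hv hvz hzu hlt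

theorem strongDominationNumber_deleteEdges_add_two_le (hD : IsStrongDominatingSet G D)
    (huv : G.Adj u v) (hdeg : ¬(sdeg G u = 1 ∧ sdeg G v = 1)) :
    strongDominationNumber (G.deleteEdges {s(u, v)}) + 2 ≤ D.ncard + sdeg G u + sdeg G v := by
  by_cases hu : u ∈ D <;> by_cases hv : v ∈ D
  · exact hD.strongDominationNumber_deleteEdges_add_two_le_of_mem_of_mem huv hu hv
  · have := hD.strongDominationNumber_deleteEdges_add_two_le_of_notMem_of_mem huv.symm hv hu
      (by rwa [and_comm])
    rw [Sym2.eq_swap] at this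
    omega
  · exact hD.strongDominationNumber_deleteEdges_add_two_le_of_notMem_of_mem huv hu hv hdeg
  · exact hD.strongDominationNumber_deleteEdges_add_two_le_of_notMem_of_notMem huv hu hv

end IsStrongDominatingSet

end

/-- Edge deletion: for a connected graph `G ≠ K₂` and an edge `uv`,
`γst(G) - 1 ≤ γst(G - e) ≤ γst(G) + deg u + deg v - 2`. -/
theorem strongDominationNumber_deleteEdge_bounds {V : Type*} [Fintype V]
    (G : SimpleGraph V) (hconn : G.Connected)
    (hK2 : ¬ Nonempty (G ≃g (⊤ : SimpleGraph (Fin 2))))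
    (u v : V) (huv : G.Adj u v) :
    (strongDominationNumber G : ℤ) - 1 ≤
        strongDominationNumber (G.deleteEdges {s(u, v)}) ∧
    (strongDominationNumber (G.deleteEdges {s(u, v)}) : ℤ) ≤
        strongDominationNumber G + sdeg G u + sdeg G v - 2 := by
  have hdeg : ¬(sdeg G u = 1 ∧ sdeg G v = 1) := fun ⟨hu, hv⟩ =>
    hK2 <| nonempty_iso_top_fin_two_of_forall_eq_or_eq huv <|
      hconn.eq_or_eq_of_neighborSet_eq_singleton (neighborSet_eq_singleton_of_sdeg_eq_one huv hu)
        (neighborSet_eq_singleton_of_sdeg_eq_one huv.symm hv)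
  obtain ⟨D, hD, hcard⟩ := exists_isStrongDominatingSet_ncard_eq G
  have hlower := strongDominationNumber_le_deleteEdges_add_one huv
  have hupper := hD.strongDominationNumber_deleteEdges_add_two_le huv hdeg
  omega
end

section
/- Let n ≥ 3 with n ≢ 0 (mod 3), and let e be any edge of the cycle graph C_n. Then γst(C_n − e) = γst((C_n)_e), i.e., the strong domination numbers of the graph obtained by deleting e and of the graph obtained by subdividing e are equal. -/
open SimpleGraph

/-!
Both graphs have maximum degree two and a Hamiltonian path whose inner vertices have degree
two: `C_n - uv` is the path `v, v + 1, …, u` on `n` vertices, and the subdivision is the path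
`w, v, v + 1, …, u` on `n + 1` vertices, `w` being the new vertex. In such a graph on `N`
vertices a dominating vertex covers at most three vertices, so `γst ≥ ⌈N / 3⌉`, and the
vertices at positions `1, 4, 7, …` (the last one moved to position `N - 2`) form a strong
dominating set of that size. Hence the two numbers are `⌈n / 3⌉` and `⌈(n + 1) / 3⌉`, which
agree since `3 ∤ n`.
-/

section StrongDomination

variable {V : Type*} {G : SimpleGraph V}

theorem strongDominationNumber_le {D : Set V} (hD : IsStrongDominatingSet G D) :
    strongDominationNumber G ≤ D.ncard :=
  Nat.sInf_le ⟨D, hD, rfl⟩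

theorem isStrongDominatingSet_univ : IsStrongDominatingSet G Set.univ :=
  fun x hx => absurd (Set.mem_univ x) hx

theorem le_strongDominationNumber {k : ℕ}
    (h : ∀ D, IsStrongDominatingSet G D → k ≤ D.ncard) : k ≤ strongDominationNumber G :=
  le_csInf ⟨_, Set.univ, isStrongDominatingSet_univ, rfl⟩ fun _ ⟨D, hD, hk⟩ => hk ▸ h D hD

theorem card_le_mul_ncard_of_isStrongDominatingSet [Finite V] {Δ : ℕ}
    (hdeg : ∀ x, sdeg G x ≤ Δ) {D : Set V} (hD : IsStrongDominatingSet G D) :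
    Nat.card V ≤ (Δ + 1) * D.ncard := by
  set T := D.toFinite.toFinset
  have hcover : (Set.univ : Set V) ⊆ ⋃ y ∈ T, insert y (G.neighborSet y) := by
    intro x _
    by_cases hx : x ∈ D
    · exact Set.mem_biUnion (by simpa [T]) (Set.mem_insert x _)
    · obtain ⟨y, hy, hxy, -⟩ := hD x hx
      exact Set.mem_biUnion (by simpa [T]) (Set.mem_insert_of_mem _ hxy.symm)
  calc Nat.card V = (Set.univ : Set V).ncard := (Set.ncard_univ V).symm
    _ ≤ (⋃ y ∈ T, insert y (G.neighborSet y)).ncard := Set.ncard_le_ncard hcover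
    _ ≤ ∑ y ∈ T, (insert y (G.neighborSet y)).ncard := T.set_ncard_biUnion_le _
    _ ≤ ∑ _y ∈ T, (Δ + 1) :=
      Finset.sum_le_sum fun y _ => (Set.ncard_insert_le _ _).trans (Nat.succ_le_succ (hdeg y))
    _ = (Δ + 1) * D.ncard := by
      rw [Finset.sum_const, smul_eq_mul, mul_comm, Set.ncard_eq_toFinset_card D]

theorem strongDominationNumber_le_of_spanning_walk {N : ℕ} (hN : 3 ≤ N) (f : ℕ → V)
    (hsurj : ∀ x, ∃ i < N, f i = x) (hadj : ∀ i, i + 1 < N → G.Adj (f i) (f (i + 1)))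
    (hdeg : ∀ i, 0 < i → i + 1 < N → ∀ x, sdeg G x ≤ sdeg G (f i)) :
    strongDominationNumber G ≤ (N + 2) / 3 := by
  classical
  set D : Finset V := (Finset.range ((N + 2) / 3)).image fun m => f (min (3 * m + 1) (N - 2))
  have hD : IsStrongDominatingSet G D := by
    intro x hx
    obtain ⟨i, hi, rfl⟩ := hsurj x
    obtain ⟨j, hj⟩ : ∃ j, j = min (3 * (i / 3) + 1) (N - 2) := ⟨_, rfl⟩
    have hjD : f j ∈ D := Finset.mem_image.2 ⟨i / 3, Finset.mem_range.2 (by omega), hj ▸ rfl⟩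
    have hij : j = i + 1 ∨ i = j + 1 := by
      have : i ≠ j := by rintro rfl; exact hx hjD
      omega
    refine ⟨f j, hjD, ?_, hdeg j (by omega) (by omega) _⟩
    rcases hij with rfl | rfl
    · exact hadj i (by omega)
    · exact (hadj j (by omega)).symm
  calc strongDominationNumber G ≤ (D : Set V).ncard := strongDominationNumber_le hD
    _ = D.card := Set.ncard_coe_finset D
    _ ≤ (Finset.range ((N + 2) / 3)).card := Finset.card_image_le
    _ = (N + 2) / 3 := Finset.card_range _

theorem strongDominationNumber_eq_of_spanning_walk [Finite V] {N : ℕ} (hN : 3 ≤ N)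
    (hcard : Nat.card V = N) (hdeg : ∀ x, sdeg G x ≤ 2) (f : ℕ → V)
    (hsurj : ∀ x, ∃ i < N, f i = x) (hadj : ∀ i, i + 1 < N → G.Adj (f i) (f (i + 1)))
    (hint : ∀ i, 0 < i → i + 1 < N → sdeg G (f i) = 2) :
    strongDominationNumber G = (N + 2) / 3 := by
  refine le_antisymm (strongDominationNumber_le_of_spanning_walk hN f hsurj hadj
    fun i hi0 hi x => (hint i hi0 hi).symm ▸ hdeg x) (le_strongDominationNumber fun D hD => ?_)
  have := card_le_mul_ncard_of_isStrongDominatingSet hdeg hD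
  omega

end StrongDomination

section EdgeOperations

variable {V : Type*} (G : SimpleGraph V)

theorem sdeg_deleteEdges_le [Finite V] (s : Set (Sym2 V)) (x : V) :
    sdeg (G.deleteEdges s) x ≤ sdeg G x :=
  Set.ncard_le_ncard fun _ hy => (deleteEdges_le s) hy

theorem neighborSet_deleteEdges_singleton_of_notMem {e : Sym2 V} {x : V} (hx : x ∉ e) :
    (G.deleteEdges {e}).neighborSet x = G.neighborSet x := by
  ext y
  simp only [mem_neighborSet, deleteEdges_adj, Set.mem_singleton_iff, and_iff_left_iff_imp]
  rintro - rfl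
  exact hx (Sym2.mem_mk_left x y)

theorem subdivide_comm (u v : V) : subdivide G u v = subdivide G v u := by
  ext a b
  rcases a with _ | x <;> rcases b with _ | y <;>
    simp [subdivide, Sym2.eq_swap (a := v), or_comm]

theorem subdivide_adj_some_some {u v x y : V} :
    (subdivide G u v).Adj (some x) (some y) ↔ (G.deleteEdges {s(u, v)}).Adj x y := by
  simp only [subdivide, fromRel_adj, deleteEdges_adj, Set.mem_singleton_iff, ne_eq,
    Option.some.injEq, Sym2.eq_swap (a := y), adj_comm G y, or_self]
  exact ⟨And.right, fun h => ⟨h.1.ne, h⟩⟩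

theorem subdivide_adj_some_none {u v x : V} :
    (subdivide G u v).Adj (some x) none ↔ x = u ∨ x = v := by
  simp [subdivide]

theorem neighborSet_subdivide_none (u v : V) :
    (subdivide G u v).neighborSet none = {some u, some v} := by
  ext (_ | x)
  · simp
  · simp [adj_comm _ none, subdivide_adj_some_none]

/-- The neighbour `y` of `x` keeps its place, unless `xy` is the subdivided edge, in which case
the new vertex takes it. -/
theorem sdeg_subdivide_some {u v : V} (huv : G.Adj u v) (x : V) :
    sdeg (subdivide G u v) (some x) = sdeg G x := by
  classical
  refine (Set.ncard_congr (fun y _ => if s(x, y) = s(u, v) then none else some y)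
    (fun y hy => ?_) (fun a b _ _ hab => ?_) (fun b hb => ?_)).symm
  · split_ifs with he
    · have hx : x ∈ s(u, v) := he ▸ Sym2.mem_mk_left x y
      simpa [adj_comm _ none, subdivide_adj_some_none] using Sym2.mem_iff.1 hx
    · exact (subdivide_adj_some_some G).2 (deleteEdges_adj.2 ⟨hy, he⟩)
  · split_ifs at hab with ha hb hb
    · exact Sym2.congr_right.1 (ha.trans hb.symm)
    · exact Option.some.inj hab
  · rcases b with _ | y
    · rcases (subdivide_adj_some_none G).1 ((mem_neighborSet _ _ _).1 hb) with rfl | rfl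
      · exact ⟨v, huv, if_pos rfl⟩
      · exact ⟨u, huv.symm, if_pos Sym2.eq_swap⟩
    · obtain ⟨hxy, he⟩ := deleteEdges_adj.1 ((subdivide_adj_some_some G).1 hb)
      exact ⟨y, hxy, if_neg he⟩

end EdgeOperations

open Fin.NatCast Fin.CommRing

section Cycle

variable {n : ℕ}

theorem sdeg_cycleGraph (hn : 3 ≤ n) (x : Fin n) : sdeg (cycleGraph n) x = 2 := by
  obtain ⟨m, rfl⟩ : ∃ m, n = m + 3 := ⟨n - 3, by omega⟩
  rw [sdeg, Set.ncard_eq_toFinset_card', Set.toFinset_card, card_neighborSet_eq_degree,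
    cycleGraph_degree_three_le]

variable [NeZero n]

theorem cycleGraph_adj_iff (hn : 2 ≤ n) {x y : Fin n} :
    (cycleGraph n).Adj x y ↔ y = x + 1 ∨ x = y + 1 := by
  obtain ⟨m, rfl⟩ : ∃ m, n = m + 2 := ⟨n - 2, by omega⟩
  rw [cycleGraph_adj, sub_eq_iff_eq_add', sub_eq_iff_eq_add', or_comm]

variable (u : Fin n)

theorem add_one_add_natCast_eq_self_iff {i : ℕ} (hi : i < n) :
    u + 1 + (i : Fin n) = u ↔ i + 1 = n := by
  rw [add_assoc, add_eq_left, ← Nat.cast_one, ← Nat.cast_add, Fin.natCast_eq_zero, add_comm]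
  exact ⟨fun h => Nat.eq_of_dvd_of_lt_two_mul (by omega) h (by omega), fun h => h ▸ dvd_rfl⟩

theorem add_one_add_natCast_eq_add_one_iff {i : ℕ} (hi : i < n) :
    u + 1 + (i : Fin n) = u + 1 ↔ i = 0 := by
  rw [add_eq_left, Fin.natCast_eq_zero]
  exact ⟨fun h => Nat.eq_zero_of_dvd_of_lt h hi, fun h => h ▸ dvd_zero n⟩

theorem exists_add_one_add_natCast_eq (x : Fin n) : ∃ i < n, u + 1 + (i : Fin n) = x :=
  ⟨(x - (u + 1)).val, (x - (u + 1)).isLt, by rw [Fin.cast_val_eq_self, add_sub_cancel]⟩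

theorem deleteEdges_cycleGraph_adj_add_one_add_natCast (hn : 3 ≤ n) {i : ℕ} (hi : i + 1 < n) :
    ((cycleGraph n).deleteEdges {s(u, u + 1)}).Adj (u + 1 + (i : Fin n))
      (u + 1 + ((i + 1 : ℕ) : Fin n)) := by
  have hsucc : u + 1 + ((i + 1 : ℕ) : Fin n) = u + 1 + (i : Fin n) + 1 := by push_cast; ring
  refine deleteEdges_adj.2 ⟨(cycleGraph_adj_iff (by omega)).2 (Or.inl hsucc), ?_⟩
  rw [Set.mem_singleton_iff, Sym2.eq_iff, add_one_add_natCast_eq_self_iff u (i := i) (by omega),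
    add_one_add_natCast_eq_add_one_iff u (i := i) (by omega), add_one_add_natCast_eq_self_iff u hi,
    add_one_add_natCast_eq_add_one_iff u hi]
  omega

theorem sdeg_deleteEdges_cycleGraph_add_one_add_natCast (hn : 3 ≤ n) {i : ℕ} (hi0 : 0 < i)
    (hi : i + 1 < n) :
    sdeg ((cycleGraph n).deleteEdges {s(u, u + 1)}) (u + 1 + (i : Fin n)) = 2 := by
  rw [sdeg, neighborSet_deleteEdges_singleton_of_notMem, ← sdeg, sdeg_cycleGraph hn]
  rw [Sym2.mem_iff, add_one_add_natCast_eq_self_iff u (by omega),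
    add_one_add_natCast_eq_add_one_iff u (by omega)]
  rintro (h | h) <;> omega

theorem strongDominationNumber_deleteEdges_cycleGraph (hn : 3 ≤ n) :
    strongDominationNumber ((cycleGraph n).deleteEdges {s(u, u + 1)}) = (n + 2) / 3 :=
  strongDominationNumber_eq_of_spanning_walk hn (by simp)
    (fun x => (sdeg_deleteEdges_le _ _ x).trans (sdeg_cycleGraph hn x).le)
    (fun i => u + 1 + (i : Fin n)) (exists_add_one_add_natCast_eq u)
    (fun _ hi => deleteEdges_cycleGraph_adj_add_one_add_natCast u hn hi)
    (fun _ hi0 hi => sdeg_deleteEdges_cycleGraph_add_one_add_natCast u hn hi0 hi)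

theorem strongDominationNumber_subdivide_cycleGraph (hn : 3 ≤ n) :
    strongDominationNumber (subdivide (cycleGraph n) u (u + 1)) = (n + 3) / 3 := by
  have hdeg : ∀ x, sdeg (subdivide (cycleGraph n) u (u + 1)) x = 2 := by
    rintro (_ | x)
    · rw [sdeg, neighborSet_subdivide_none, Set.ncard_pair]
      intro h
      have := (add_one_add_natCast_eq_self_iff u (i := 0) (by omega)).1 (by simpa using h.symm)
      omega
    · rw [sdeg_subdivide_some _ ((cycleGraph_adj_iff (by omega)).2 (Or.inl rfl)),
        sdeg_cycleGraph hn]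
  refine strongDominationNumber_eq_of_spanning_walk (N := n + 1) (by omega) (by simp)
    (fun x => (hdeg x).le) (fun | 0 => none | i + 1 => some (u + 1 + (i : Fin n)))
    ?_ ?_ (fun _ _ _ => hdeg _)
  · rintro (_ | x)
    · exact ⟨0, by omega, rfl⟩
    · obtain ⟨i, hi, rfl⟩ := exists_add_one_add_natCast_eq u x
      exact ⟨i + 1, by omega, rfl⟩
  · rintro (_ | i) hi
    · exact (subdivide_adj_some_none _).2 (Or.inr (by simp)) |>.symm
    · exact (subdivide_adj_some_some _).2
        (deleteEdges_cycleGraph_adj_add_one_add_natCast u hn (by omega))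

end Cycle

/-- For `n ≥ 3` with `n ≢ 0 (mod 3)` and any edge `e` of `C_n`,
`γst(C_n - e) = γst((C_n)_e)`. -/
theorem strongDominationNumber_cycle_deleteEdge_eq_subdivide (n : ℕ) (hn : 3 ≤ n)
    (hmod : n % 3 ≠ 0) (u v : Fin n) (huv : (SimpleGraph.cycleGraph n).Adj u v) :
    strongDominationNumber ((SimpleGraph.cycleGraph n).deleteEdges {s(u, v)}) =
      strongDominationNumber (subdivide (SimpleGraph.cycleGraph n) u v) := by
  have : NeZero n := ⟨by omega⟩
  have hvalue : (n + 2) / 3 = (n + 3) / 3 := by omega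
  rcases (cycleGraph_adj_iff (by omega)).1 huv with rfl | rfl
  · rw [strongDominationNumber_deleteEdges_cycleGraph u hn,
      strongDominationNumber_subdivide_cycleGraph u hn, hvalue]
  · rw [Sym2.eq_swap, subdivide_comm, strongDominationNumber_deleteEdges_cycleGraph v hn,
      strongDominationNumber_subdivide_cycleGraph v hn, hvalue]
end

section
/- Let G_1 and G_2 be finite simple graphs with G_2 having at least one vertex. Then the strong domination number of the corona product equals the order of G_1: γst(G_1 ∘ G_2) = |V(G_1)|; moreover, V(G_1) itself is a minimum strong dominating set of G_1 ∘ G_2. -/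
open SimpleGraph

/-!
Each vertex `(i, y)` of the `i`-th copy of `G₂` has its closed neighbourhood inside the block
`{i} ∪ {i} × V(G₂)`, and that whole block lies in the closed neighbourhood of `i`; hence `i` strongly
dominates `(i, y)`, and `V(G₁)` is a strong dominating set. Conversely every dominating set must
meet each of the `|V(G₁)|` disjoint blocks, since it has to dominate some `(i, y)`.
-/

theorem sdeg_le_of_insert_neighborSet_subset {V : Type*} {G : SimpleGraph V} {x y : V}
    (h : insert x (G.neighborSet x) ⊆ insert y (G.neighborSet y))
    (hy : (G.neighborSet y).Finite) : sdeg G x ≤ sdeg G y := by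
  have hx : (G.neighborSet x).Finite := (hy.insert y).subset ((Set.subset_insert _ _).trans h)
  have := Set.ncard_le_ncard h (hy.insert y)
  rwa [Set.ncard_insert_of_notMem G.notMem_neighborSet_self hx,
    Set.ncard_insert_of_notMem G.notMem_neighborSet_self hy, Nat.add_le_add_iff_right] at this

theorem strongDominationNumber_eq_ncard {V : Type*} {G : SimpleGraph V} {D : Set V}
    (hD : IsStrongDominatingSet G D)
    (hmin : ∀ D', IsStrongDominatingSet G D' → D.ncard ≤ D'.ncard) :
    strongDominationNumber G = D.ncard :=
  IsLeast.csInf_eq ⟨⟨D, hD, rfl⟩, by rintro _ ⟨D', hD', rfl⟩; exact hmin D' hD'⟩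

namespace corona

variable {V1 V2 : Type*} {G1 : SimpleGraph V1} {G2 : SimpleGraph V2}

def base : V1 ⊕ V1 × V2 → V1 := Sum.elim id Prod.fst

@[simp]
theorem adj_inl_inr {i j : V1} {z : V2} :
    (corona G1 G2).Adj (.inl i) (.inr (j, z)) ↔ i = j := by
  simp [corona, SimpleGraph.fromRel_adj]

theorem base_eq_of_adj_inr {p : V1 × V2} {v : V1 ⊕ V1 × V2}
    (h : (corona G1 G2).Adj (.inr p) v) : base v = p.1 := by
  rcases p with ⟨i, y⟩
  rcases v with j | ⟨j, z⟩ <;> simp [corona, base] at h ⊢ <;> grind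

theorem insert_neighborSet_inr_subset (p : V1 × V2) :
    insert (.inr p) ((corona G1 G2).neighborSet (.inr p)) ⊆ base ⁻¹' {p.1} := by
  rintro v (rfl | hv)
  · rfl
  · exact base_eq_of_adj_inr hv

theorem base_preimage_subset_insert_neighborSet_inl (i : V1) :
    base ⁻¹' {i} ⊆ insert (.inl i) ((corona G1 G2).neighborSet (.inl i)) := by
  rintro (j | ⟨j, z⟩) (rfl : base _ = i)
  · exact Set.mem_insert _ _
  · exact Set.mem_insert_of_mem _ (by simp [base])

theorem sdeg_inr_le_sdeg_inl [Finite V1] [Finite V2] (i : V1) (y : V2) :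
    sdeg (corona G1 G2) (.inr (i, y)) ≤ sdeg (corona G1 G2) (.inl i) :=
  sdeg_le_of_insert_neighborSet_subset
    ((insert_neighborSet_inr_subset (i, y)).trans (base_preimage_subset_insert_neighborSet_inl i))
    (Set.toFinite _)

theorem isStrongDominatingSet_range_inl [Finite V1] [Finite V2] :
    IsStrongDominatingSet (corona G1 G2) (Set.range Sum.inl) := by
  rintro (i | ⟨i, y⟩) hv
  · exact absurd ⟨i, rfl⟩ hv
  · exact ⟨.inl i, ⟨i, rfl⟩, (adj_inl_inr.2 rfl).symm, sdeg_inr_le_sdeg_inl i y⟩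

theorem base_image_eq_univ [Nonempty V2] {D : Set (V1 ⊕ V1 × V2)}
    (hD : IsStrongDominatingSet (corona G1 G2) D) : base '' D = Set.univ := by
  refine Set.eq_univ_of_forall fun i => ?_
  let y : V2 := Classical.arbitrary V2
  by_cases hy : .inr (i, y) ∈ D
  · exact ⟨_, hy, rfl⟩
  · obtain ⟨d, hd, hadj, -⟩ := hD _ hy
    exact ⟨d, hd, base_eq_of_adj_inr hadj⟩

theorem card_le_ncard_of_isStrongDominatingSet [Finite V1] [Finite V2] [Nonempty V2]
    {D : Set (V1 ⊕ V1 × V2)} (hD : IsStrongDominatingSet (corona G1 G2) D) :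
    Nat.card V1 ≤ D.ncard := by
  simpa [base_image_eq_univ hD] using Set.ncard_image_le (f := base) (s := D)

theorem ncard_range_inl [Finite V1] :
    (Set.range (Sum.inl : V1 → V1 ⊕ V1 × V2)).ncard = Nat.card V1 := by
  rw [← Set.image_univ, Set.ncard_image_of_injective _ Sum.inl_injective, Set.ncard_univ]

end corona

open corona in
/-- `γst(G₁ ∘ G₂) = |V(G₁)|`, and `V(G₁)` itself is a minimum strong
dominating set of the corona product. -/
theorem strongDominationNumber_corona {V1 V2 : Type*} [Fintype V1] [Fintype V2]
    [Nonempty V2] (G1 : SimpleGraph V1) (G2 : SimpleGraph V2) :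
    strongDominationNumber (corona G1 G2) = Fintype.card V1 ∧
    IsStrongDominatingSet (corona G1 G2)
      (Set.range (Sum.inl : V1 → V1 ⊕ V1 × V2)) ∧
    (Set.range (Sum.inl : V1 → V1 ⊕ V1 × V2)).ncard =
      strongDominationNumber (corona G1 G2) := by
  have hmin : strongDominationNumber (corona G1 G2) = (Set.range Sum.inl).ncard :=
    strongDominationNumber_eq_ncard isStrongDominatingSet_range_inl fun _ hD =>
      ncard_range_inl.trans_le (card_le_ncard_of_isStrongDominatingSet hD)
  refine ⟨?_, isStrongDominatingSet_range_inl, hmin.symm⟩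
  rw [hmin, ncard_range_inl, Nat.card_eq_fintype_card]
end

section
/- For every positive integer r, the strong domination number of the 3r-subdivision of the 5-cycle satisfies γst(C_5^{1/(3r)}) = 5r. -/
open SimpleGraph

/-!
Every vertex of `C₅^{1/(3r)}` has degree 2: the branch vertices keep their degree in `C₅` and
the internal vertices lie on paths. Hence strong domination is plain domination, and each vertex
dominates at most three vertices, so a strong dominating set has at least `15r / 3 = 5r`
elements. Conversely, the five branch vertices together with every third internal vertex of each
subdivided path form a dominating set of size `5 + 5 (r - 1) = 5r`.
-/

theorem sdeg_eq_degree {V : Type*} (G : SimpleGraph V) (v : V) [Fintype (G.neighborSet v)] :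
    sdeg G v = G.degree v := by
  rw [sdeg, ← Nat.card_coe_set_eq, Nat.card_eq_fintype_card, card_neighborSet_eq_degree]

theorem sdeg_eq_two_of_adj_iff {V : Type*} {G : SimpleGraph V} {v a b : V} (hab : a ≠ b)
    (hadj : ∀ c, G.Adj v c ↔ c = a ∨ c = b) : sdeg G v = 2 := by
  rw [sdeg, show G.neighborSet v = {a, b} from Set.ext hadj, Set.ncard_pair hab]

theorem strongDominationNumber_eq {V : Type*} {G : SimpleGraph V} {n : ℕ} {D : Set V}
    (hD : IsStrongDominatingSet G D) (hcard : D.ncard = n)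
    (hmin : ∀ D', IsStrongDominatingSet G D' → n ≤ D'.ncard) :
    strongDominationNumber G = n :=
  IsLeast.csInf_eq ⟨⟨D, hD, hcard⟩, by rintro _ ⟨D', hD', rfl⟩; exact hmin D' hD'⟩

theorem isStrongDominatingSet_of_sdeg_eq {V : Type*} {G : SimpleGraph V} {d : ℕ}
    (hdeg : ∀ v, sdeg G v = d) {D : Set V} (hD : ∀ x ∉ D, ∃ y ∈ D, G.Adj x y) :
    IsStrongDominatingSet G D := fun x hx =>
  let ⟨y, hy, hxy⟩ := hD x hx
  ⟨y, hy, hxy, ((hdeg x).trans (hdeg y).symm).le⟩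

theorem IsStrongDominatingSet.card_le_mul_ncard {V : Type*} [Finite V] {G : SimpleGraph V}
    {Δ : ℕ} (hdeg : ∀ v, sdeg G v ≤ Δ) {D : Set V} (hD : IsStrongDominatingSet G D) :
    Nat.card V ≤ (Δ + 1) * D.ncard := by
  classical
  cases nonempty_fintype V
  have hcover : (Finset.univ : Finset V) ⊆
      D.toFinset.biUnion fun y => insert y (G.neighborFinset y) := by
    intro x _
    simp only [Finset.mem_biUnion, Set.mem_toFinset, Finset.mem_insert, mem_neighborFinset]
    by_cases hx : x ∈ D
    · exact ⟨x, hx, Or.inl rfl⟩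
    · obtain ⟨y, hy, hxy, -⟩ := hD x hx
      exact ⟨y, hy, Or.inr hxy.symm⟩
  have hball : ∀ y ∈ D.toFinset, (insert y (G.neighborFinset y)).card ≤ Δ + 1 := fun y _ =>
    (Finset.card_insert_le _ _).trans <| by
      rw [card_neighborFinset_eq_degree, ← sdeg_eq_degree]; exact Nat.succ_le_succ (hdeg y)
  calc Nat.card V = (Finset.univ : Finset V).card := by simp
    _ ≤ D.toFinset.card * (Δ + 1) :=
      (Finset.card_le_card hcover).trans (Finset.card_biUnion_le_card_mul _ _ _ hball)
    _ = (Δ + 1) * D.ncard := by rw [Set.ncard_eq_toFinset_card', mul_comm]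

theorem Sym2.mk_out {α : Type*} (z : Sym2 α) : s(z.out.1, z.out.2) = z :=
  z.out_eq

theorem Sym2.mem_iff_out {α : Type*} {x : α} (z : Sym2 α) : x ∈ z ↔ x = z.out.1 ∨ x = z.out.2 := by
  conv_lhs => rw [← z.mk_out]
  exact Sym2.mem_iff

section kSubdivision

variable {V : Type*} (G : SimpleGraph V) {k : ℕ}

theorem out_fst_ne_out_snd (e : G.edgeSet) :
    (Quot.out (e : Sym2 V)).1 ≠ (Quot.out (e : Sym2 V)).2 :=
  G.ne_of_adj <| by rw [← mem_edgeSet, Sym2.mk_out]; exact e.2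

theorem kSubdivision_not_adj_inl_inl (hk : 2 ≤ k) (x y : V) :
    ¬ (kSubdivision G k).Adj (.inl x) (.inl y) := by
  simp only [kSubdivision, fromRel_adj]
  rintro ⟨-, h | h⟩ <;> omega

theorem kSubdivision_adj_inl_inr (x : V) (e : G.edgeSet) (i : Fin (k - 1)) :
    (kSubdivision G k).Adj (.inl x) (.inr (e, i)) ↔
      (x = (Quot.out (e : Sym2 V)).1 ∧ (i : ℕ) = 0) ∨
      (x = (Quot.out (e : Sym2 V)).2 ∧ (i : ℕ) = k - 2) := by
  simp [kSubdivision]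

theorem kSubdivision_adj_inr_inr (e f : G.edgeSet) (i j : Fin (k - 1)) :
    (kSubdivision G k).Adj (.inr (e, i)) (.inr (f, j)) ↔
      e = f ∧ ((j : ℕ) = i + 1 ∨ (i : ℕ) = j + 1) := by
  simp only [kSubdivision, fromRel_adj, ne_eq, Sum.inr.injEq, Prod.ext_iff, Fin.ext_iff]
  constructor
  · rintro ⟨-, ⟨rfl, h⟩ | ⟨rfl, h⟩⟩ <;> simp [h]
  · rintro ⟨rfl, h | h⟩ <;> simp [h]

theorem neighborSet_kSubdivision_inl [DecidableEq V] (hk : 2 ≤ k) (x : V) :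
    (kSubdivision G k).neighborSet (.inl x) =
      (fun e : G.edgeSet => .inr (e, ⟨if x = (Quot.out (e : Sym2 V)).1 then 0 else k - 2,
        by split_ifs <;> omega⟩)) '' {e | x ∈ (e : Sym2 V)} := by
  ext (y | ⟨e, i⟩)
  · simp [kSubdivision_not_adj_inl_inl G hk]
  · simp only [mem_neighborSet, kSubdivision_adj_inl_inr, Set.mem_image, Set.mem_ofPred_eq,
      Sum.inr.injEq, Prod.ext_iff, Fin.ext_iff, Sym2.mem_iff_out, existsAndEq, true_and]
    have hne := out_fst_ne_out_snd G e
    split_ifs with hx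
    · simp [hx, hne, eq_comm]
    · simp [hx, eq_comm]

theorem sdeg_kSubdivision_inl (hk : 2 ≤ k) (x : V) :
    sdeg (kSubdivision G k) (.inl x) = sdeg G x := by
  classical
  rw [sdeg, neighborSet_kSubdivision_inl G hk, Set.ncard_image_of_injective _ fun _ _ h =>
    (Prod.ext_iff.1 (Sum.inr_injective h)).1, sdeg, ← Nat.card_coe_set_eq, ← Nat.card_coe_set_eq,
    ← Nat.card_congr (G.incidenceSetEquivNeighborSet x)]
  exact Nat.card_congr (Equiv.subtypeSubtypeEquivSubtypeInter (· ∈ G.edgeSet) (x ∈ ·))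

theorem sdeg_kSubdivision_inr (hk : 3 ≤ k) (e : G.edgeSet) (i : Fin (k - 1)) :
    sdeg (kSubdivision G k) (.inr (e, i)) = 2 := by
  have hi := i.2
  have hadj_inl (x : V) :=
    ((kSubdivision G k).adj_comm (.inr (e, i)) (.inl x)).trans (kSubdivision_adj_inl_inr G x e i)
  have hadj_inr (f : G.edgeSet) (j : Fin (k - 1)) := kSubdivision_adj_inr_inr G e f i j
  rcases Nat.eq_zero_or_pos i with h0 | h0
  · refine sdeg_eq_two_of_adj_iff (a := .inl (Quot.out (e : Sym2 V)).1)
      (b := .inr (e, ⟨1, by omega⟩)) (by simp) ?_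
    rintro (x | ⟨f, ⟨j, hj⟩⟩)
    · simp only [hadj_inl, h0, Sum.inl.injEq, reduceCtorEq, and_true, or_false,
        or_iff_left_iff_imp, and_imp]
      omega
    · simp [hadj_inr, Fin.ext_iff, h0, eq_comm (a := f)]
  rcases lt_or_eq_of_le (show (i : ℕ) ≤ k - 2 by omega) with hlt | hlast
  · refine sdeg_eq_two_of_adj_iff (a := .inr (e, ⟨i - 1, by omega⟩))
      (b := .inr (e, ⟨i + 1, by omega⟩)) (by simp) ?_
    rintro (x | ⟨f, ⟨j, hj⟩⟩)
    · simp only [hadj_inl, reduceCtorEq, or_self, iff_false, not_or, not_and]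
      omega
    · simp only [hadj_inr, Sum.inr.injEq, Prod.ext_iff, Fin.ext_iff, eq_comm (a := f),
        ← and_or_left]
      exact and_congr_right fun _ => by omega
  · refine sdeg_eq_two_of_adj_iff (a := .inl (Quot.out (e : Sym2 V)).2)
      (b := .inr (e, ⟨i - 1, by omega⟩)) (by simp) ?_
    rintro (x | ⟨f, ⟨j, hj⟩⟩)
    · simp only [hadj_inl, hlast, Sum.inl.injEq, reduceCtorEq, and_true, or_false,
        or_iff_right_iff_imp, and_imp]
      omega
    · simp only [hadj_inr, Sum.inr.injEq, Prod.ext_iff, Fin.ext_iff, eq_comm (a := f),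
        reduceCtorEq, false_or]
      exact and_congr_right fun _ => by omega

end kSubdivision

section everyThirdVertex

variable {V : Type*} (G : SimpleGraph V) (r : ℕ)

/-- Internal vertex `i` of a path sits at distance `i + 1` from its first endpoint, so on each
subdivided path of length `3r` this set consists of the vertices at distance divisible by 3 from
its ends. -/
def everyThirdVertex : Set (V ⊕ G.edgeSet × Fin (3 * r - 1)) :=
  Set.range .inl ∪ Set.range fun p : G.edgeSet × Fin (r - 1) => .inr (p.1, ⟨3 * p.2 + 2, by omega⟩)

variable {G r}

theorem inl_mem_everyThirdVertex (x : V) : .inl x ∈ everyThirdVertex G r :=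
  Or.inl ⟨x, rfl⟩

theorem inr_mem_everyThirdVertex_iff {e : G.edgeSet} {i : Fin (3 * r - 1)} :
    .inr (e, i) ∈ everyThirdVertex G r ↔ (i : ℕ) % 3 = 2 := by
  simp only [everyThirdVertex, Set.mem_union, Set.mem_range, reduceCtorEq, exists_false,
    false_or, Sum.inr.injEq, Prod.ext_iff, Fin.ext_iff, Prod.exists]
  constructor
  · rintro ⟨_, m, -, hm⟩
    omega
  · intro hi
    exact ⟨e, ⟨i / 3, by omega⟩, rfl, by simp only; omega⟩

theorem ncard_everyThirdVertex [Finite V] :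
    (everyThirdVertex G r).ncard = Nat.card V + Nat.card G.edgeSet * (r - 1) := by
  rw [everyThirdVertex, Set.ncard_union_eq, Set.ncard_range_of_injective Sum.inl_injective,
    Set.ncard_range_of_injective, Nat.card_prod, Nat.card_fin]
  · rintro ⟨e, m⟩ ⟨f, n⟩ h
    simp only [Sum.inr.injEq, Prod.mk.injEq, Fin.mk.injEq] at h ⊢
    exact ⟨h.1, Fin.ext (by omega)⟩
  · exact Set.disjoint_left.2 fun _ ⟨_, hx⟩ ⟨_, hy⟩ => Sum.inl_ne_inr (hx.trans hy.symm)

theorem exists_adj_mem_everyThirdVertex (hr : 1 ≤ r) {a : V ⊕ G.edgeSet × Fin (3 * r - 1)}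
    (ha : a ∉ everyThirdVertex G r) :
    ∃ b ∈ everyThirdVertex G r, (kSubdivision G (3 * r)).Adj a b := by
  obtain x | ⟨e, i⟩ := a
  · exact absurd (inl_mem_everyThirdVertex x) ha
  rw [inr_mem_everyThirdVertex_iff] at ha
  have hi := i.2
  by_cases h0 : (i : ℕ) = 0
  · exact ⟨.inl (Quot.out (e : Sym2 V)).1, inl_mem_everyThirdVertex _,
      ((kSubdivision_adj_inl_inr G _ e i).2 (.inl ⟨rfl, h0⟩)).symm⟩
  by_cases hlast : (i : ℕ) = 3 * r - 2
  · exact ⟨.inl (Quot.out (e : Sym2 V)).2, inl_mem_everyThirdVertex _,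
      ((kSubdivision_adj_inl_inr G _ e i).2 (.inr ⟨rfl, hlast⟩)).symm⟩
  rcases (show (i : ℕ) % 3 = 0 ∨ (i : ℕ) % 3 = 1 by omega) with h | h
  · refine ⟨.inr (e, ⟨i - 1, by omega⟩), inr_mem_everyThirdVertex_iff.2 (by simp only; omega),
      (kSubdivision_adj_inr_inr G e e _ _).2 ⟨rfl, .inr (by simp only; omega)⟩⟩
  · refine ⟨.inr (e, ⟨i + 1, by omega⟩), inr_mem_everyThirdVertex_iff.2 (by simp only; omega),
      (kSubdivision_adj_inr_inr G e e _ _).2 ⟨rfl, .inl rfl⟩⟩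

end everyThirdVertex

/-- `γst(C₅^{1/(3r)}) = 5r` for every positive integer `r`. -/
theorem strongDominationNumber_kSubdivision_cycle_five_three_mul (r : ℕ) (hr : 1 ≤ r) :
    strongDominationNumber (kSubdivision (SimpleGraph.cycleGraph 5) (3 * r)) = 5 * r := by
  have hdeg : ∀ v, sdeg (kSubdivision (cycleGraph 5) (3 * r)) v = 2 := by
    rintro (x | ⟨e, i⟩)
    · rw [sdeg_kSubdivision_inl _ (by omega), sdeg_eq_degree, cycleGraph_degree_three_le]
    · exact sdeg_kSubdivision_inr _ (by omega) e i
  have hedges : Nat.card (cycleGraph 5).edgeSet = 5 := by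
    rw [Nat.card_eq_fintype_card, ← Set.toFinset_card]
    decide
  refine strongDominationNumber_eq (isStrongDominatingSet_of_sdeg_eq hdeg
    fun _ => exists_adj_mem_everyThirdVertex hr) ?_ fun D hD => ?_
  · rw [ncard_everyThirdVertex, hedges, Nat.card_fin]
    omega
  · have hcard := hD.card_le_mul_ncard fun v => (hdeg v).le
    rw [Nat.card_sum, Nat.card_prod, hedges, Nat.card_fin, Nat.card_fin] at hcard
    omega
end
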